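/- arXiv:1904.13276 — 2 statements merged into one kernel-verified Lean document; each statement's English description precedes it below -/
import Mathlib

section
/- Let f : ℝ → ℝ be continuously differentiable, with f bounded and f' bounded and uniformly continuous. Then for every x in ℝ, lim_{t→0⁺} ∫_ℝ ((y−x)/(4√π · t^{3/2})) · exp(−(x−y)²/(4t)) · f(y) dy = f'(x). -/
open Real MeasureTheory Filter

lemma my_integrable_sq_mul_exp_neg_mul_sq {b : ℝ} (hb : 0 < b) :
    Integrable fun x : ℝ => x ^ 2 * Real.exp (-b * x ^ 2) := by
  have h := integrable_rpow_mul_exp_neg_mul_sq hb (s := 2) (by norm_num)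
  refine h.congr (Filter.Eventually.of_forall fun x => ?_)
  simp only [show ((2:ℝ)) = ((2:ℕ):ℝ) by norm_num, Real.rpow_natCast]

lemma my_integral_odd_gaussian (b : ℝ) : ∫ x : ℝ, x * Real.exp (-b * x ^ 2) = 0 := by
  have h := MeasureTheory.integral_neg_eq_self (fun x : ℝ => x * Real.exp (-b * x ^ 2))
    (volume : Measure ℝ)
  simp only [neg_sq, neg_mul] at h
  rw [MeasureTheory.integral_neg] at h
  simp only [neg_mul]
  linarith

lemma my_integral_sq_mul_exp_neg_mul_sq {b : ℝ} (hb : 0 < b) :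
    ∫ x : ℝ, x ^ 2 * Real.exp (-b * x ^ 2) = Real.sqrt (π / b) / (2 * b) := by
  have hu : ∀ y : ℝ, HasDerivAt (fun z : ℝ => z) 1 y := fun y => hasDerivAt_id y
  have hv : ∀ y : ℝ, HasDerivAt (fun z : ℝ => -Real.exp (-b * z ^ 2) / (2 * b))
      (y * Real.exp (-b * y ^ 2)) y := by
    intro y
    have h1 : HasDerivAt (fun z : ℝ => -b * z ^ 2) (-b * (2 * y)) y := by
      simpa using (hasDerivAt_pow 2 y).const_mul (-b)
    have h2 : HasDerivAt (fun z : ℝ => -Real.exp (-b * z ^ 2) / (2 * b)) _ y :=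
      (h1.exp.neg).div_const (2 * b)
    convert h2 using 1
    field_simp
  have hb' : (2 * b) ≠ 0 := by positivity
  have i1 : Integrable ((fun z : ℝ => z) * fun y : ℝ => y * Real.exp (-b * y ^ 2)) := by
    refine (my_integrable_sq_mul_exp_neg_mul_sq hb).congr
      (Filter.Eventually.of_forall fun y => ?_)
    simp [Pi.mul_apply]; ring
  have i2 : Integrable ((fun _ : ℝ => (1:ℝ)) * fun z : ℝ => -Real.exp (-b * z ^ 2) / (2 * b)) := by
    refine (((integrable_exp_neg_mul_sq hb).neg.div_const (2 * b)).congr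
      (Filter.Eventually.of_forall fun y => ?_))
    simp [Pi.mul_apply]
  have i3 : Integrable ((fun z : ℝ => z) * fun z : ℝ => -Real.exp (-b * z ^ 2) / (2 * b)) := by
    refine (((integrable_mul_exp_neg_mul_sq hb).neg.div_const (2 * b)).congr
      (Filter.Eventually.of_forall fun y => ?_))
    simp [Pi.mul_apply]
    ring
  have key := MeasureTheory.integral_mul_deriv_eq_deriv_mul_of_integrable (fun y _ => hu y) (fun y _ => hv y) i1 i2 i3
  have e1 : (∫ y : ℝ, y * (y * Real.exp (-b * y ^ 2))) = ∫ y : ℝ, y ^ 2 * Real.exp (-b * y ^ 2) := by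
    congr 1; funext y; ring
  have e2 : (∫ y : ℝ, (1:ℝ) * (-Real.exp (-b * y ^ 2) / (2 * b)))
      = -(Real.sqrt (π / b) / (2 * b)) := by
    simp only [one_mul, neg_div]
    rw [MeasureTheory.integral_neg, integral_div, integral_gaussian]
  rw [e1, e2] at key
  linarith

/-- **The derivative of the heat kernel acts as a discrete differentiation operator.**
Let `f : ℝ → ℝ` be continuously differentiable with `f` bounded and `f'` bounded and
uniformly continuous. Then for every `x`,
`∫ ((y-x)/(4√π t^{3/2})) exp(-(x-y)²/(4t)) f(y) dy → f'(x)` as `t → 0⁺`. -/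
theorem heat_kernel_derivative_recovers_derivative
    (f f' : ℝ → ℝ)
    (hf : ∀ x, HasDerivAt f (f' x) x)
    (hf'c : UniformContinuous f')
    (hfb : ∃ M, ∀ x, |f x| ≤ M)
    (hf'b : ∃ M, ∀ x, |f' x| ≤ M)
    (x : ℝ) :
    Tendsto
      (fun t : ℝ => ∫ y : ℝ,
        ((y - x) / (4 * Real.sqrt π * t ^ ((3:ℝ)/2)))
          * Real.exp (-(x - y)^2 / (4 * t)) * f y)
      (nhdsWithin 0 (Set.Ioi 0)) (nhds (f' x)) := by
  obtain ⟨M', hM'⟩ := hf'b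
  have hM'0 : 0 ≤ M' := le_trans (abs_nonneg _) (hM' 0)
  have hfc : Continuous f := by
    rw [continuous_iff_continuousAt]; exact fun y => (hf y).continuousAt
  have hπ : 0 < Real.sqrt π := Real.sqrt_pos.mpr Real.pi_pos
  -- the normalized remainder
  set h : ℝ → ℝ := fun u => (f (x + u) - f x - f' x * u) / u with hh
  have h_meas : Measurable h := by
    apply Measurable.div _ measurable_id
    exact (((hfc.comp (continuous_const.add continuous_id)).sub continuous_const).sub
      (continuous_const.mul continuous_id)).measurable
  have h_id : ∀ u : ℝ, u * h u = f (x + u) - f x - f' x * u := by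
    intro u
    rcases eq_or_ne u 0 with rfl | hu
    · simp [hh]
    · rw [hh]; field_simp
  -- Lipschitz bound on f
  have hlip : ∀ u : ℝ, |f (x + u) - f x| ≤ M' * |u| := by
    intro u
    have hl : LipschitzWith M'.toNNReal f := by
      apply lipschitzWith_of_nnnorm_deriv_le (fun y => (hf y).differentiableAt)
      intro y
      rw [← NNReal.coe_le_coe]
      simp only [coe_nnnorm, Real.norm_eq_abs, Real.coe_toNNReal _ hM'0]
      rw [(hf y).deriv]
      exact hM' y
    have := hl.dist_le_mul (x + u) x
    simpa [Real.dist_eq, Real.coe_toNNReal _ hM'0, abs_sub_comm] using this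
  have h_bdd : ∀ u, |h u| ≤ 2 * M' := by
    intro u
    rcases eq_or_ne u 0 with rfl | hu
    · simp [hh]; positivity
    · have hu' : 0 < |u| := abs_pos.mpr hu
      rw [hh, abs_div, div_le_iff₀ hu']
      have h1 : |f (x + u) - f x - f' x * u| ≤ |f (x + u) - f x| + |f' x * u| := by
        rw [sub_eq_add_neg (f (x + u) - f x)]
        exact (abs_add_le _ _).trans (by rw [abs_neg])
      have h2 : |f' x * u| ≤ M' * |u| := by
        rw [abs_mul]; exact mul_le_mul_of_nonneg_right (hM' x) (abs_nonneg u)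
      calc |f (x + u) - f x - f' x * u| ≤ M' * |u| + M' * |u| := by
            linarith [hlip u]
        _ = 2 * M' * |u| := by ring
  -- the remainder tends to 0
  have h_tendsto : Tendsto h (nhds 0) (nhds 0) := by
    have hL := (hasDerivAt_iff_isLittleO.mp (hf x)).tendsto_div_nhds_zero
    have hadd : Tendsto (fun u : ℝ => x + u) (nhds 0) (nhds x) := by
      simpa using (tendsto_id : Tendsto id (nhds (0:ℝ)) (nhds 0)).const_add x
    have hcomp := hL.comp hadd
    refine hcomp.congr fun u => ?_
    simp only [Function.comp_apply, add_sub_cancel_left, smul_eq_mul, hh]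
    ring_nf
  -- the fixed Gaussian weight
  set ψ : ℝ → ℝ := fun v => v ^ 2 * Real.exp (-(4:ℝ)⁻¹ * v ^ 2) / (4 * Real.sqrt π) with hψ
  have hψ_nonneg : ∀ v, 0 ≤ ψ v := by intro v; rw [hψ]; positivity
  have hψ_int : Integrable ψ :=
    (my_integrable_sq_mul_exp_neg_mul_sq (by norm_num)).div_const _
  have hψ_meas : Measurable ψ := by
    apply Measurable.div _ measurable_const
    exact (measurable_id.pow_const 2).mul
      (((measurable_id.pow_const 2).const_mul _).exp)
  set E : ℝ → ℝ := fun t => ∫ v : ℝ, ψ v * h (Real.sqrt t * v) with hE_def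
  -- key identity for fixed t > 0
  have key : ∀ t : ℝ, t ∈ Set.Ioi (0:ℝ) →
      (∫ y : ℝ, ((y - x) / (4 * Real.sqrt π * t ^ ((3:ℝ)/2)))
          * Real.exp (-(x - y)^2 / (4 * t)) * f y) = f' x + E t := by
    intro t ht
    rw [Set.mem_Ioi] at ht
    have ht' : t ≠ 0 := ne_of_gt ht
    have hb : (0:ℝ) < (4 * t)⁻¹ := by positivity
    set b : ℝ := (4 * t)⁻¹ with hb_def
    have hst : 0 < Real.sqrt t := Real.sqrt_pos.mpr ht
    have hst2 : Real.sqrt t ^ 2 = t := Real.sq_sqrt ht.le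
    have hts : t ^ ((3:ℝ)/2) = t * Real.sqrt t := by
      rw [show (3:ℝ)/2 = 1 + 1/2 by norm_num, Real.rpow_add ht, Real.rpow_one,
        Real.sqrt_eq_rpow]
    set c : ℝ := 4 * Real.sqrt π * t ^ ((3:ℝ)/2) with hc_def
    have hc : 0 < c := by
      rw [hc_def]; positivity
    have hc' : c = 4 * Real.sqrt π * (t * Real.sqrt t) := by rw [hc_def, hts]
    -- the three pieces
    set T1 : ℝ → ℝ := fun u => (f x / c) * (u * Real.exp (-b * u ^ 2)) with hT1
    set T2 : ℝ → ℝ := fun u => (f' x / c) * (u ^ 2 * Real.exp (-b * u ^ 2)) with hT2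
    set T3 : ℝ → ℝ := fun u => (u ^ 2 * Real.exp (-b * u ^ 2) / c) * h u with hT3
    have iT1 : Integrable T1 := (integrable_mul_exp_neg_mul_sq hb).const_mul _
    have isq : Integrable (fun u : ℝ => u ^ 2 * Real.exp (-b * u ^ 2)) :=
      my_integrable_sq_mul_exp_neg_mul_sq hb
    have iT2 : Integrable T2 := isq.const_mul _
    have iT3 : Integrable T3 := by
      apply Integrable.mono' ((isq.div_const c).mul_const (2 * M'))
      · exact (((measurable_id.pow_const 2).mul
          (((measurable_id.pow_const 2).const_mul _).exp)).div_const c).mul h_meas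
          |>.aestronglyMeasurable
      · refine Filter.Eventually.of_forall fun u => ?_
        rw [hT3, Real.norm_eq_abs, abs_mul]
        have hnn : 0 ≤ u ^ 2 * Real.exp (-b * u ^ 2) / c := by positivity
        rw [abs_of_nonneg hnn]
        exact mul_le_mul_of_nonneg_left (h_bdd u) hnn
    -- change of variables y = u + x
    have step1 : (∫ y : ℝ, ((y - x) / c) * Real.exp (-(x - y)^2 / (4 * t)) * f y)
        = ∫ u : ℝ, T1 u + T2 u + T3 u := by
      rw [← MeasureTheory.integral_add_right_eq_self
        (fun y : ℝ => ((y - x) / c) * Real.exp (-(x - y)^2 / (4 * t)) * f y) x]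
      congr 1
      funext u
      have e1 : -(x - (u + x))^2 / (4 * t) = -b * u ^ 2 := by
        rw [hb_def]; field_simp; ring
      have e2 : f (u + x) = f x + f' x * u + u * h u := by
        rw [add_comm u x]; linarith [h_id u]
      simp only [add_sub_cancel_right, e1, e2, hT1, hT2, hT3]
      ring
    -- split the integral
    have step2 : (∫ u : ℝ, T1 u + T2 u + T3 u)
        = (∫ u, T1 u) + (∫ u, T2 u) + (∫ u, T3 u) := by
      have A : Integrable (fun u => T1 u + T2 u) := iT1.add iT2
      rw [MeasureTheory.integral_add A iT3, MeasureTheory.integral_add iT1 iT2]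
    -- first piece vanishes by oddness
    have val1 : (∫ u, T1 u) = 0 := by
      rw [hT1, MeasureTheory.integral_const_mul, my_integral_odd_gaussian, mul_zero]
    -- second piece equals f' x
    have val2 : (∫ u, T2 u) = f' x := by
      rw [hT2, MeasureTheory.integral_const_mul, my_integral_sq_mul_exp_neg_mul_sq hb]
      have e3 : π / b = π * (4 * t) := by rw [hb_def]; field_simp
      have e4 : Real.sqrt (π * (4 * t)) = Real.sqrt π * (2 * Real.sqrt t) := by
        rw [Real.sqrt_mul Real.pi_pos.le, show (4:ℝ) * t = 2^2 * t by norm_num,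
          Real.sqrt_mul (by positivity), Real.sqrt_sq (by norm_num : (0:ℝ) ≤ 2)]
      have e5 : Real.sqrt π * (2 * Real.sqrt t) / (2 * (4 * t)⁻¹) = c := by
        rw [hc']; field_simp
      rw [e3, e4, hb_def, e5]
      exact div_mul_cancel₀ _ (ne_of_gt hc)
    -- third piece: scaling u = √t · v
    have val3 : (∫ u, T3 u) = E t := by
      have hscale := MeasureTheory.Measure.integral_comp_mul_left T3 (Real.sqrt t)
      have habs : |(Real.sqrt t)⁻¹| = (Real.sqrt t)⁻¹ := abs_of_nonneg (by positivity)
      rw [habs, smul_eq_mul] at hscale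
      have : (∫ u, T3 u) = Real.sqrt t * ∫ v : ℝ, T3 (Real.sqrt t * v) := by
        rw [hscale]; field_simp
      rw [this, hE_def, ← MeasureTheory.integral_const_mul]
      congr 1
      funext v
      have e5 : -b * (Real.sqrt t * v) ^ 2 = -(4:ℝ)⁻¹ * v ^ 2 := by
        rw [hb_def, mul_pow, hst2]; field_simp
      simp only [hT3, hψ]
      rw [e5]
      have e6 : Real.sqrt t * ((Real.sqrt t * v) ^ 2 * Real.exp (-(4:ℝ)⁻¹ * v ^ 2) / c)
          = v ^ 2 * Real.exp (-(4:ℝ)⁻¹ * v ^ 2) / (4 * Real.sqrt π) := by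
        rw [mul_pow, hst2, hc']
        field_simp
      rw [← mul_assoc, e6]
    rw [step1, step2, val1, val2, val3, zero_add]
  -- E tends to zero by dominated convergence
  have hE : Tendsto E (nhdsWithin 0 (Set.Ioi 0)) (nhds 0) := by
    have := MeasureTheory.tendsto_integral_filter_of_dominated_convergence
      (μ := (volume : Measure ℝ)) (F := fun t v => ψ v * h (Real.sqrt t * v))
      (f := fun _ : ℝ => (0:ℝ)) (l := nhdsWithin 0 (Set.Ioi 0))
      (bound := fun v => ψ v * (2 * M'))
      (Filter.Eventually.of_forall fun t =>
        (hψ_meas.mul (h_meas.comp (measurable_id.const_mul _))).aestronglyMeasurable)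
      (Filter.Eventually.of_forall fun t => MeasureTheory.ae_of_all _ fun v => by
        rw [Real.norm_eq_abs, abs_mul, abs_of_nonneg (hψ_nonneg v)]
        exact mul_le_mul_of_nonneg_left (h_bdd _) (hψ_nonneg v))
      (hψ_int.mul_const _)
      (MeasureTheory.ae_of_all _ fun v => by
        have s1 : Tendsto Real.sqrt (nhds 0) (nhds 0) := by
          have := Real.continuous_sqrt.tendsto 0
          simpa using this
        have s2 : Tendsto (fun t : ℝ => Real.sqrt t * v)
            (nhdsWithin 0 (Set.Ioi 0)) (nhds 0) := by
          have := (s1.mono_left (nhdsWithin_le_nhds : nhdsWithin (0:ℝ) (Set.Ioi 0) ≤ nhds 0)).mul_const v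
          simpa using this
        have s3 := h_tendsto.comp s2
        have := tendsto_const_nhds (x := ψ v) (f := nhdsWithin (0:ℝ) (Set.Ioi 0)) |>.mul s3
        simpa using this)
    simpa using this
  have hfinal : Tendsto (fun t : ℝ => f' x + E t)
      (nhdsWithin 0 (Set.Ioi 0)) (nhds (f' x)) := by
    have := tendsto_const_nhds (x := f' x) (f := nhdsWithin (0:ℝ) (Set.Ioi 0)) |>.add hE
    simpa using this
  refine hfinal.congr' ?_
  filter_upwards [self_mem_nhdsWithin] with t ht
  exact (key t ht).symm
end

section
/- Let σ, φ be continuous on [a,b] with σ continuously differentiable, let τ and T be twice continuously differentiable on [a,b] with τ satisfying 0 = φ(y) + (d/dy)(σ(y)·τ'(y)) for all y in [a,b], and let w be continuously differentiable on [a,b] with w(a) = w(b) = 0. Define J(S) := (1/2)∫_a^b σ(y)·(S'(y) − τ'(y))² dy. Then lim_{ε→0} (J(T+εw) − J(T))/ε = ∫_a^b w(y)·(d/dy)(σ(y)·(τ'(y) − T'(y))) dy = −∫_a^b w(y)·(φ(y) + (d/dy)(σ(y)·T'(y))) dy. Consequently the negative gradient flow of J is ∂T/∂t = φ + (d/dy)(σ·T'),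 i.e., the revenue gradient flow coincides with the gradient flow of the weighted Sobolev-type seminorm J. -/
open MeasureTheory Filter

/-- **The revenue gradient flow is the gradient flow of a weighted Sobolev seminorm.**
Let `σ, φ` be continuous on `[a,b]` with `σ` continuously differentiable (derivative `σ'`),
let `τ, T` be `C²` on `[a,b]` with `τ` the stationary solution `0 = φ + (σ τ')'`, and let
`w` be `C¹` on `[a,b]` with `w(a) = w(b) = 0`. With
`J(S) = (1/2) ∫_a^b σ (S' − τ')²` (so `J(T + εw)` has integrand `σ (T' + ε w' − τ')²`),
the Gateaux differential satisfies
`(J(T+εw) − J(T))/ε → ∫_a^b w · (σ (τ' − T'))' = −∫_a^b w · (φ + (σ T')')` as `ε → 0`;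
consequently the negative gradient flow of `J` is `∂T/∂t = φ + (σ T')'`, the revenue
gradient flow. -/
theorem sobolev_seminorm_gradient_flow
    (a b : ℝ) (hab : a < b)
    (σ σ' φ τ τ' τ'' T T' T'' w w' : ℝ → ℝ)
    (hσ : ∀ y ∈ Set.Icc a b, HasDerivAt σ (σ' y) y)
    (hσ' : ContinuousOn σ' (Set.Icc a b))
    (hφ : ContinuousOn φ (Set.Icc a b))
    (hτ1 : ∀ y ∈ Set.Icc a b, HasDerivAt τ (τ' y) y)
    (hτ2 : ∀ y ∈ Set.Icc a b, HasDerivAt τ' (τ'' y) y)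
    (hτ2c : ContinuousOn τ'' (Set.Icc a b))
    (hT1 : ∀ y ∈ Set.Icc a b, HasDerivAt T (T' y) y)
    (hT2 : ∀ y ∈ Set.Icc a b, HasDerivAt T' (T'' y) y)
    (hT2c : ContinuousOn T'' (Set.Icc a b))
    (hw : ∀ y ∈ Set.Icc a b, HasDerivAt w (w' y) y)
    (hw'c : ContinuousOn w' (Set.Icc a b))
    (hwa : w a = 0) (hwb : w b = 0)
    -- τ is the stationary solution: 0 = φ + (σ τ')'
    (hstat : ∀ y ∈ Set.Icc a b, φ y + (σ' y * τ' y + σ y * τ'' y) = 0) :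
    Tendsto
      (fun ε : ℝ =>
        ((((1:ℝ)/2) * ∫ y in a..b, σ y * (T' y + ε * w' y - τ' y)^2)
          - ((1:ℝ)/2) * ∫ y in a..b, σ y * (T' y - τ' y)^2) / ε)
      (nhdsWithin 0 {(0:ℝ)}ᶜ)
      (nhds (∫ y in a..b,
        w y * (σ' y * (τ' y - T' y) + σ y * (τ'' y - T'' y))))
    ∧ (∫ y in a..b, w y * (σ' y * (τ' y - T' y) + σ y * (τ'' y - T'' y)))
        = -∫ y in a..b, w y * (φ y + (σ' y * T' y + σ y * T'' y)) := by

  have hab' : a ≤ b := hab.le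
  have huIcc : Set.uIcc a b = Set.Icc a b := Set.uIcc_of_le hab'
  -- continuity facts
  have hσc : ContinuousOn σ (Set.Icc a b) := fun y hy => ((hσ y hy).continuousAt).continuousWithinAt
  have hτ'c : ContinuousOn τ' (Set.Icc a b) := fun y hy => ((hτ2 y hy).continuousAt).continuousWithinAt
  have hT'c : ContinuousOn T' (Set.Icc a b) := fun y hy => ((hT2 y hy).continuousAt).continuousWithinAt
  have hwc : ContinuousOn w (Set.Icc a b) := fun y hy => ((hw y hy).continuousAt).continuousWithinAt
  -- integrable pieces
  have hint1 : IntervalIntegrable (fun y => σ y * (w' y * (T' y - τ' y))) MeasureTheory.volume a b := by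
    apply ContinuousOn.intervalIntegrable
    rw [huIcc]
    exact hσc.mul (hw'c.mul (hT'c.sub hτ'c))
  have hint2 : IntervalIntegrable (fun y => σ y * (w' y)^2) MeasureTheory.volume a b := by
    apply ContinuousOn.intervalIntegrable
    rw [huIcc]
    exact hσc.mul (hw'c.pow 2)
  have hint0 : IntervalIntegrable (fun y => σ y * (T' y - τ' y)^2) MeasureTheory.volume a b := by
    apply ContinuousOn.intervalIntegrable
    rw [huIcc]
    exact hσc.mul ((hT'c.sub hτ'c).pow 2)
  set C : ℝ := ∫ y in a..b, σ y * (w' y * (T' y - τ' y)) with hC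
  set D : ℝ := ∫ y in a..b, σ y * (w' y)^2 with hD
  -- difference quotient identity for ε ≠ 0
  have hquot : ∀ ε : ℝ, ε ≠ 0 →
      ((((1:ℝ)/2) * ∫ y in a..b, σ y * (T' y + ε * w' y - τ' y)^2)
          - ((1:ℝ)/2) * ∫ y in a..b, σ y * (T' y - τ' y)^2) / ε
        = C + ε / 2 * D := by
    intro ε hε
    have hexp : (∫ y in a..b, σ y * (T' y + ε * w' y - τ' y)^2)
        = (∫ y in a..b, σ y * (T' y - τ' y)^2) + (2 * ε) * C + ε ^ 2 * D := by
      calc (∫ y in a..b, σ y * (T' y + ε * w' y - τ' y)^2)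
          = ∫ y in a..b, ((σ y * (T' y - τ' y)^2 + (2 * ε) * (σ y * (w' y * (T' y - τ' y))))
              + ε ^ 2 * (σ y * (w' y)^2)) :=
            intervalIntegral.integral_congr (fun y _ => by ring)
        _ = (∫ y in a..b, (σ y * (T' y - τ' y)^2 + (2 * ε) * (σ y * (w' y * (T' y - τ' y)))))
              + ∫ y in a..b, ε ^ 2 * (σ y * (w' y)^2) :=
            intervalIntegral.integral_add (hint0.add (hint1.const_mul _)) (hint2.const_mul _)
        _ = (∫ y in a..b, σ y * (T' y - τ' y)^2) + (2 * ε) * C + ε ^ 2 * D := by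
            rw [intervalIntegral.integral_add hint0 (hint1.const_mul _),
              intervalIntegral.integral_const_mul, intervalIntegral.integral_const_mul, hC, hD]
    rw [hexp]
    field_simp
    ring
  -- integration by parts
  have hv : ∀ y ∈ Set.uIcc a b, HasDerivAt (fun z => σ z * (T' z - τ' z))
      (σ' y * (T' y - τ' y) + σ y * (T'' y - τ'' y)) y := by
    intro y hy
    rw [huIcc] at hy
    exact (hσ y hy).mul ((hT2 y hy).sub (hτ2 y hy))
  have hw2 : ∀ y ∈ Set.uIcc a b, HasDerivAt w (w' y) y := by
    intro y hy; rw [huIcc] at hy; exact hw y hy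
  have hw'int : IntervalIntegrable w' MeasureTheory.volume a b := by
    apply ContinuousOn.intervalIntegrable; rw [huIcc]; exact hw'c
  have hvint : IntervalIntegrable (fun y => σ' y * (T' y - τ' y) + σ y * (T'' y - τ'' y))
      MeasureTheory.volume a b := by
    apply ContinuousOn.intervalIntegrable; rw [huIcc]
    exact (hσ'.mul (hT'c.sub hτ'c)).add (hσc.mul (hT2c.sub hτ2c))
  have hibp := intervalIntegral.integral_mul_deriv_eq_deriv_mul hw2 hv hw'int hvint
  -- hibp : ∫ w y * (σ' (T'-τ') + σ (T''-τ'')) = w b * _ - w a * _ - ∫ w' y * (σ y * (T' y - τ' y))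
  rw [hwa, hwb, zero_mul, zero_mul, sub_zero, zero_sub] at hibp
  have hkey : (∫ y in a..b, w y * (σ' y * (τ' y - T' y) + σ y * (τ'' y - T'' y))) = C := by
    have h1 : (∫ y in a..b, w y * (σ' y * (τ' y - T' y) + σ y * (τ'' y - T'' y)))
        = ∫ y in a..b, -(w y * (σ' y * (T' y - τ' y) + σ y * (T'' y - τ'' y))) := by
      apply intervalIntegral.integral_congr
      intro y _; ring
    rw [h1, intervalIntegral.integral_neg, hibp, neg_neg, hC]
    apply intervalIntegral.integral_congr
    intro y _; ring
  constructor
  · have hT : Tendsto (fun ε : ℝ => C + ε / 2 * D) (nhdsWithin 0 {(0:ℝ)}ᶜ) (nhds C) := by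
      have : Tendsto (fun ε : ℝ => C + ε / 2 * D) (nhds 0) (nhds (C + 0 / 2 * D)) := by
        apply Tendsto.add tendsto_const_nhds
        exact ((tendsto_id.div_const 2).mul tendsto_const_nhds)
      simpa using this.mono_left nhdsWithin_le_nhds
    rw [hkey]
    refine hT.congr' ?_
    filter_upwards [self_mem_nhdsWithin] with ε hε
    exact (hquot ε hε).symm
  · rw [← intervalIntegral.integral_neg]
    apply intervalIntegral.integral_congr
    intro y hy
    rw [huIcc] at hy
    have := hstat y hy
    simp only
    linear_combination (w y) * this
end
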